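/- Let h¹, h², B > 0 and let P, N be disjoint finite sets with valuations θ_i > 0 for i ∈ P and |θ_j| > 0 for j ∈ N, with Σ_{i∈P} θ_i > h¹ and Σ_{j∈N} |θ_j| > h². Suppose every agent's contribution satisfies x_i < ((h¹+h²)/(B+h¹+h²))·|θ_i| and X¹ = Σ_{i∈P} x_i, X² = Σ_{j∈N} x_j. If X¹ = h¹, then B < (h¹+h²)(ϑ¹−h¹)/h¹, and if X² = h², then B < (h¹+h²)(ϑ²−h²)/h². -/

import Mathlib

/-! Summing the strict individual bounds over the group that meets its target gives
`h < (h¹ + h²) / (B + h¹ + h²) · ϑ`, which rearranges to the bound on `B`. -/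

open Finset

lemma lt_mul_sum_of_sum_eq {ι : Type*} {s : Finset ι} {x w : ι → ℝ} {c h : ℝ} (hh : 0 < h)
    (hsum : ∑ i ∈ s, x i = h) (hlt : ∀ i ∈ s, x i < c * w i) : h < c * ∑ i ∈ s, w i := by
  have hs : s.Nonempty := nonempty_of_sum_ne_zero (hsum ▸ hh.ne')
  rw [← hsum, mul_sum]
  exact sum_lt_sum_of_nonempty hs hlt

lemma lt_mul_sub_div_of_lt_div_mul {h s B S : ℝ} (hh : 0 < h) (hd : 0 < B + s)
    (hlt : h < s / (B + s) * S) : B < s * (S - h) / h := by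
  rw [div_mul_eq_mul_div, lt_div_iff₀ hd] at hlt
  rw [lt_div_iff₀ hh]
  linarith

theorem pprn_equilibrium_existence_general {ι : Type*} [DecidableEq ι]
    (P N : Finset ι)
    (h1 h2 B : ℝ) (hh1 : 0 < h1) (hh2 : 0 < h2) (hB : 0 < B)
    (θ x : ι → ℝ)
    (hθP : ∀ i ∈ P, 0 < θ i)
    (hbound : ∀ i ∈ P ∪ N, x i < ((h1 + h2) / (B + h1 + h2)) * |θ i|) :
    ((∑ i ∈ P, x i = h1) →
      B < (h1 + h2) * ((∑ i ∈ P, θ i) - h1) / h1) ∧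
    ((∑ j ∈ N, x j = h2) →
      B < (h1 + h2) * ((∑ j ∈ N, |θ j|) - h2) / h2) := by
  simp only [add_assoc] at hbound
  have hd : 0 < B + (h1 + h2) := by positivity
  refine ⟨fun hX => ?_, fun hX => ?_⟩
  · refine lt_mul_sub_div_of_lt_div_mul hh1 hd (lt_mul_sum_of_sum_eq hh1 hX fun i hi => ?_)
    rw [← abs_of_pos (hθP i hi)]
    exact hbound i (mem_union_left N hi)
  · exact lt_mul_sub_div_of_lt_div_mul hh2 hd
      (lt_mul_sum_of_sum_eq hh2 hX fun j hj => hbound j (mem_union_right P hj))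

theorem pprn_equilibrium_existence {ι : Type*} [DecidableEq ι]
    (P N : Finset ι) (hdisj : Disjoint P N)
    (h1 h2 B : ℝ) (hh1 : 0 < h1) (hh2 : 0 < h2) (hB : 0 < B)
    (θ x : ι → ℝ)
    (hθP : ∀ i ∈ P, 0 < θ i) (hθN : ∀ j ∈ N, 0 < |θ j|)
    (hv1 : h1 < ∑ i ∈ P, θ i) (hv2 : h2 < ∑ j ∈ N, |θ j|)
    (hx : ∀ i ∈ P ∪ N, 0 ≤ x i)
    (hbound : ∀ i ∈ P ∪ N, x i < ((h1 + h2) / (B + h1 + h2)) * |θ i|) :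
    ((∑ i ∈ P, x i = h1) →
      B < (h1 + h2) * ((∑ i ∈ P, θ i) - h1) / h1) ∧
    ((∑ j ∈ N, x j = h2) →
      B < (h1 + h2) * ((∑ j ∈ N, |θ j|) - h2) / h2) :=
  pprn_equilibrium_existence_general P N h1 h2 B hh1 hh2 hB θ x hθP hbound
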